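/- arXiv:0710.2573 — 8 statements merged into one kernel-verified Lean document; each statement's English description precedes it below -/
import Mathlib

section
/- Let Γ be a finite simple graph, let v_i, v_j be vertices with d(v_i, v_j) ≥ 2, and let K be a connected component of Γ \ S_i (where S_i is the closed neighborhood of v_i) and Q a connected component of Γ \ S_j. If v_j ∉ K and K ∩ Q ≠ ∅, then K ⊆ Q. -/
/-- The star (closed neighborhood) of a vertex. -/
def gstar {V : Type*} (G : SimpleGraph V) (v : V) : Set V := {u | u = v ∨ G.Adj v u}

/-- `K` is a connected component of the induced subgraph of `G` on the set `s`. -/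
def IsCompOf {V : Type*} (G : SimpleGraph V) (s K : Set V) : Prop :=
  K.Nonempty ∧ K ⊆ s ∧ (G.induce K).Connected ∧
    ∀ K' : Set V, K ⊆ K' → K' ⊆ s → (G.induce K').Connected → K' = K

namespace IsCompOf

variable {V : Type*} {G : SimpleGraph V} {s K : Set V}

theorem subset_of_connected (hK : IsCompOf G s K) {L : Set V} (hLs : L ⊆ s)
    (hL : (G.induce L).Connected) (hLK : (L ∩ K).Nonempty) : L ⊆ K := by
  have hunion : (G.induce (L ∪ K)).Connected :=
    SimpleGraph.induce_union_connected hL.preconnected hK.2.2.1.preconnected hLK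
  rw [← hK.2.2.2 (L ∪ K) Set.subset_union_right (Set.union_subset hLs hK.2.1) hunion]
  exact Set.subset_union_left

theorem mem_of_adj (hK : IsCompOf G s K) {u v : V} (hu : u ∈ K) (hv : v ∈ s)
    (huv : G.Adj u v) : v ∈ K := by
  have hunion : (G.induce (K ∪ {v})).Connected :=
    SimpleGraph.connected_induce_union hK.2.2.1.preconnected
      SimpleGraph.Preconnected.of_subsingleton hu rfl huv
  rw [← hK.2.2.2 (K ∪ {v}) Set.subset_union_left
    (Set.union_subset hK.2.1 (Set.singleton_subset_iff.mpr hv)) hunion]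
  exact Set.mem_union_right _ rfl

end IsCompOf

theorem stmt0_general {V : Type*} (G : SimpleGraph V) (i j : V)
    (hne : i ≠ j) (hnadj : ¬ G.Adj i j)
    (K Q : Set V)
    (hK : IsCompOf G ((gstar G i)ᶜ) K) (hQ : IsCompOf G ((gstar G j)ᶜ) Q)
    (hjK : j ∉ K) (hKQ : (K ∩ Q).Nonempty) :
    K ⊆ Q := by
  have hj : j ∈ (gstar G i)ᶜ := by
    rintro (rfl | hij)
    exacts [hne rfl, hnadj hij]
  -- `j` has no neighbour in `K`, since such a neighbour would pull `j` into `K`.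
  have hKj : K ⊆ (gstar G j)ᶜ := by
    rintro u hu (rfl | hju)
    exacts [hjK hu, hjK (hK.mem_of_adj hu hj hju.symm)]
  exact hQ.subset_of_connected hKj hK.2.2.1 hKQ

theorem stmt0 {V : Type*} [Fintype V] (G : SimpleGraph V) (i j : V)
    (hne : i ≠ j) (hnadj : ¬ G.Adj i j)
    (K Q : Set V)
    (hK : IsCompOf G ((gstar G i)ᶜ) K) (hQ : IsCompOf G ((gstar G j)ᶜ) Q)
    (hjK : j ∉ K) (hKQ : (K ∩ Q).Nonempty) :
    K ⊆ Q :=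
  stmt0_general G i j hne hnadj K Q hK hQ hjK hKQ
end

section
/- Let Γ be a connected finite simple graph and let v_i, v_j be vertices with d(v_i, v_j) ≥ 3. Let K be a connected component of Γ \ S_i and Q a connected component of Γ \ S_j. If v_i ∉ Q and v_j ∉ K, then K ∩ Q = ∅. -/
section

variable {V : Type*} {G : SimpleGraph V}

lemma mem_gstar_self (v : V) : v ∈ gstar G v := Or.inl rfl

lemma dist_le_two_of_mem_gstar {i j p : V} (hi : p ∈ gstar G i) (hj : p ∈ gstar G j) :
    G.dist i j ≤ 2 := by
  rcases hi with rfl | hip <;> rcases hj with rfl | hjp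
  · simp
  · exact (G.dist_le (.cons hjp.symm .nil)).trans (by simp)
  · exact (G.dist_le (.cons hip .nil)).trans (by simp)
  · exact (G.dist_le (.cons hip (.cons hjp.symm .nil))).trans (by simp)

end

namespace IsCompOf

open SimpleGraph

variable {V : Type*} {G : SimpleGraph V} {s t K Q : Set V}

lemma subset (hK : IsCompOf G s K) : K ⊆ s := hK.2.1

lemma mem_of_adj_s1 (hK : IsCompOf G s K) {k p : V} (hk : k ∈ K) (hkp : G.Adj k p) (hp : p ∈ s) :
    p ∈ K := by
  obtain ⟨-, hKs, hKconn, hKmax⟩ := hK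
  have hconn : (G.induce (K ∪ {p})).Connected :=
    connected_induce_union hKconn.preconnected (by simp) hk rfl hkp
  rw [← hKmax _ Set.subset_union_left (Set.union_subset hKs (by simpa using hp)) hconn]
  exact Or.inr rfl

lemma subset_compl_gstar {i j : V} (hQ : IsCompOf G (gstar G j)ᶜ Q) (hij : i ∉ gstar G j)
    (hiQ : i ∉ Q) : Q ⊆ (gstar G i)ᶜ := by
  rintro u hu (rfl | hiu)
  · exact hiQ hu
  · exact hiQ (hQ.mem_of_adj_s1 hu hiu.symm hij)

lemma eq_of_inter_nonempty (hK : IsCompOf G s K) (hQ : IsCompOf G t Q) (hKt : K ⊆ t)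
    (hQs : Q ⊆ s) (hKQ : (K ∩ Q).Nonempty) : K = Q := by
  obtain ⟨-, hKs, hKconn, hKmax⟩ := hK
  obtain ⟨-, hQt, hQconn, hQmax⟩ := hQ
  have hconn := induce_union_connected hKconn.preconnected hQconn.preconnected hKQ
  calc K = K ∪ Q := (hKmax _ Set.subset_union_left (Set.union_subset hKs hQs) hconn).symm
    _ = Q := hQmax _ Set.subset_union_right (Set.union_subset hKt hQt) hconn

lemma exists_adj_not_mem (hK : IsCompOf G s K) (hconn : G.Connected) {a : V} (ha : a ∉ K) :
    ∃ k ∈ K, ∃ p, G.Adj k p ∧ p ∉ s := by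
  obtain ⟨k₀, hk₀⟩ := hK.1
  obtain ⟨d, -, hdK, hdK'⟩ := (hconn.preconnected k₀ a).some.exists_boundary_dart K hk₀ ha
  exact ⟨d.fst, hdK, d.snd, d.adj, fun hs => hdK' (hK.mem_of_adj_s1 hdK d.adj hs)⟩

end IsCompOf

theorem stmt1_general {V : Type*} (G : SimpleGraph V) (hconn : G.Connected)
    (i j : V) (hd : 3 ≤ G.dist i j)
    (K Q : Set V)
    (hK : IsCompOf G ((gstar G i)ᶜ) K) (hQ : IsCompOf G ((gstar G j)ᶜ) Q)
    (hiQ : i ∉ Q) (hjK : j ∉ K) :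
    K ∩ Q = ∅ := by
  have hij : i ∉ gstar G j := fun h => by
    have := dist_le_two_of_mem_gstar (mem_gstar_self i) h; omega
  have hji : j ∉ gstar G i := fun h => by
    have := dist_le_two_of_mem_gstar h (mem_gstar_self j); omega
  refine Set.not_nonempty_iff_eq_empty.mp fun hKQ => ?_
  have hKeqQ : K = Q := hK.eq_of_inter_nonempty hQ (hK.subset_compl_gstar hji hjK)
    (hQ.subset_compl_gstar hij hiQ) hKQ
  obtain ⟨k, hk, p, hkp, hpi⟩ :=
    hK.exists_adj_not_mem hconn fun hiK => hK.subset hiK (mem_gstar_self i)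
  have hpj : p ∈ gstar G j := by
    by_contra hpj
    subst hKeqQ
    exact hpi (hK.subset (hQ.mem_of_adj_s1 hk hkp hpj))
  have := dist_le_two_of_mem_gstar (not_not.mp hpi) hpj
  omega

theorem stmt1 {V : Type*} [Fintype V] (G : SimpleGraph V) (hconn : G.Connected)
    (i j : V) (hd : 3 ≤ G.dist i j)
    (K Q : Set V)
    (hK : IsCompOf G ((gstar G i)ᶜ) K) (hQ : IsCompOf G ((gstar G j)ᶜ) Q)
    (hiQ : i ∉ Q) (hjK : j ∉ K) :
    K ∩ Q = ∅ :=
  stmt1_general G hconn i j hd K Q hK hQ hiQ hjK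
end

section
/- Let Γ be a finite simple graph containing no SIL. Let v_i, v_j be vertices with d(v_i, v_j) = 2, let K_j be the connected component of Γ \ S_i containing v_j, and let Q_i be the connected component of Γ \ S_j containing v_i. Then every vertex of Γ lies in K_j ∪ Q_i ∪ (L_i ∩ L_j). -/
def glink {V : Type*} (G : SimpleGraph V) (v : V) : Set V := {u | G.Adj v u}

/-- Γ contains a separating intersection of links. -/
def HasSIL {V : Type*} (G : SimpleGraph V) : Prop :=
  ∃ i j : V, ∃ R : Set V, i ≠ j ∧ ¬ G.Adj i j ∧
    IsCompOf G ((glink G i ∩ glink G j)ᶜ) R ∧ i ∉ R ∧ j ∉ R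

/-- The reachability class of `x` inside the induced subgraph on `s`. -/
def compSet {V : Type*} (G : SimpleGraph V) (s : Set V) (x : V) (hx : x ∈ s) : Set V :=
  {y | ∃ hy : y ∈ s, (G.induce s).Reachable ⟨x, hx⟩ ⟨y, hy⟩}

lemma mem_compSet_self {V : Type*} (G : SimpleGraph V) (s : Set V) (x : V) (hx : x ∈ s) :
    x ∈ compSet G s x hx := ⟨hx, SimpleGraph.Reachable.refl _⟩

lemma compSet_subset {V : Type*} (G : SimpleGraph V) (s : Set V) (x : V) (hx : x ∈ s) :
    compSet G s x hx ⊆ s := fun _ hy => hy.1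

lemma compSet_connected {V : Type*} (G : SimpleGraph V) (s : Set V) (x : V) (hx : x ∈ s) :
    (G.induce (compSet G s x hx)).Connected := by
  classical
  apply G.induce_connected_of_patches x (mem_compSet_self G s x hx)
  intro y hy
  obtain ⟨hys, hreach⟩ := hy
  obtain ⟨p⟩ := hreach
  -- map the walk to G
  let q := p.map (SimpleGraph.Embedding.induce s).toHom
  refine ⟨{w | w ∈ q.support}, ?_, ?_, ?_, ?_⟩
  · -- all support vertices are in compSet
    intro w hw
    simp only [Set.mem_setOf_eq, q, SimpleGraph.Walk.support_map, List.mem_map] at hw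
    obtain ⟨w', hw', rfl⟩ := hw
    exact ⟨w'.2, ⟨(p.takeUntil w' hw').copy rfl (Subtype.ext rfl)⟩⟩
  · exact q.start_mem_support
  · exact q.end_mem_support
  · have := q.connected_induce_support
    exact this.preconnected _ _

lemma compSet_isCompOf {V : Type*} (G : SimpleGraph V) (s : Set V) (x : V) (hx : x ∈ s) :
    IsCompOf G s (compSet G s x hx) := by
  refine ⟨⟨x, mem_compSet_self G s x hx⟩, compSet_subset G s x hx,
    compSet_connected G s x hx, ?_⟩
  intro K' hsub hsub' hconn
  apply Set.Subset.antisymm _ hsub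
  intro y hy
  have hxK : x ∈ K' := hsub (mem_compSet_self G s x hx)
  have hreach : (G.induce K').Reachable ⟨x, hxK⟩ ⟨y, hy⟩ := hconn.preconnected _ _
  have := hreach.map (G.induceHomOfLE hsub').toHom
  exact ⟨hsub' hy, this⟩

lemma isCompOf_eq_compSet {V : Type*} {G : SimpleGraph V} {s K : Set V}
    (hK : IsCompOf G s K) {x : V} (hx : x ∈ K) :
    K = compSet G s x (hK.2.1 hx) := by
  refine (hK.2.2.2 (compSet G s x (hK.2.1 hx)) ?_ (compSet_subset G s x _)
    (compSet_connected G s x _)).symm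
  intro y hy
  have hreach : (G.induce K).Reachable ⟨x, hx⟩ ⟨y, hy⟩ := hK.2.2.1.preconnected _ _
  exact ⟨hK.2.1 hy, hreach.map (G.induceHomOfLE hK.2.1).toHom⟩

lemma mem_of_adj_isCompOf {V : Type*} {G : SimpleGraph V} {s K : Set V}
    (hK : IsCompOf G s K) {x y : V} (hx : x ∈ K) (hy : y ∈ s) (hadj : G.Adj x y) :
    y ∈ K := by
  rw [isCompOf_eq_compSet hK hx]
  refine ⟨hy, ?_⟩
  have : (G.induce s).Adj ⟨x, hK.2.1 hx⟩ ⟨y, hy⟩ := hadj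
  exact this.reachable

lemma walk_lemma {V : Type*} {G : SimpleGraph V} {i j : V}
    (hnadj : ¬ G.Adj i j)
    {Kj Qi : Set V}
    (hK : IsCompOf G ((gstar G i)ᶜ) Kj) (hjK : j ∈ Kj)
    (hQ : IsCompOf G ((gstar G j)ᶜ) Qi) (hiQ : i ∈ Qi) :
    ∀ {a b : ↥((glink G i ∩ glink G j)ᶜ)}
      (_ : (G.induce ((glink G i ∩ glink G j)ᶜ)).Walk a b),
      (↑b : V) ∈ gstar G i ∪ gstar G j → (↑a : V) ∉ gstar G i → (↑a : V) ∉ gstar G j →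
      (↑a : V) ∈ Kj ∨ (↑a : V) ∈ Qi := by
  intro a b p
  induction p with
  | nil =>
    intro hb hai haj
    rcases hb with h | h
    · exact absurd h hai
    · exact absurd h haj
  | @cons a a' b h p ih =>
    intro hb hai haj
    have hadj : G.Adj (↑a : V) (↑a' : V) := h
    have ha'S : (↑a' : V) ∈ (glink G i ∩ glink G j)ᶜ := a'.2
    by_cases ha'j : (↑a' : V) ∈ gstar G j
    · -- a' is in the star of j; conclude a ∈ Kj
      have ha'Kj : (↑a' : V) ∈ Kj := by
        rcases ha'j with h' | h'
        · rw [h']; exact hjK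
        · -- a' adjacent to j, a' ∉ gstar i
          have ha'i : (↑a' : V) ∈ (gstar G i)ᶜ := by
            intro hcon
            rcases hcon with h'' | h''
            · exact hnadj (h'' ▸ h').symm
            · exact ha'S ⟨h'', h'⟩
          exact mem_of_adj_isCompOf hK hjK ha'i h'
      exact Or.inl (mem_of_adj_isCompOf hK ha'Kj hai hadj.symm)
    · by_cases ha'i : (↑a' : V) ∈ gstar G i
      · -- a' is in the star of i; conclude a ∈ Qi
        have ha'Qi : (↑a' : V) ∈ Qi := by
          rcases ha'i with h' | h'
          · rw [h']; exact hiQ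
          · exact mem_of_adj_isCompOf hQ hiQ ha'j h'
        exact Or.inr (mem_of_adj_isCompOf hQ ha'Qi haj hadj.symm)
      · -- a' in neither star: use the induction hypothesis
        rcases ih hb ha'i ha'j with h' | h'
        · exact Or.inl (mem_of_adj_isCompOf hK h' hai hadj.symm)
        · exact Or.inr (mem_of_adj_isCompOf hQ h' haj hadj.symm)

theorem stmt5 {V : Type*} [Fintype V] (G : SimpleGraph V) (hsil : ¬ HasSIL G)
    (i j : V) (hd : G.dist i j = 2)
    (Kj Qi : Set V)
    (hK : IsCompOf G ((gstar G i)ᶜ) Kj) (hjK : j ∈ Kj)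
    (hQ : IsCompOf G ((gstar G j)ᶜ) Qi) (hiQ : i ∈ Qi) :
    ∀ v : V, v ∈ Kj ∪ Qi ∪ (glink G i ∩ glink G j) := by
  have hne : i ≠ j := by
    intro h; rw [h, SimpleGraph.dist_self] at hd; omega
  have hnadj : ¬ G.Adj i j := by
    intro h
    rw [← SimpleGraph.dist_eq_one_iff_adj] at h
    omega
  intro v
  by_contra hv
  simp only [Set.mem_union, not_or] at hv
  obtain ⟨⟨hvK, hvQ⟩, hvL⟩ := hv
  have hvi : v ≠ i := fun h => hvQ (h ▸ hiQ)
  have hvj : v ≠ j := fun h => hvK (h ▸ hjK)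
  -- v is not adjacent to i
  have hvai : ¬ G.Adj i v := by
    intro h
    apply hvQ
    have hvSj : v ∈ (gstar G j)ᶜ := by
      intro hcon
      rcases hcon with h' | h'
      · exact hvj h'
      · exact hvL ⟨h, h'⟩
    exact mem_of_adj_isCompOf hQ hiQ hvSj h
  have hvaj : ¬ G.Adj j v := by
    intro h
    apply hvK
    have hvSi : v ∈ (gstar G i)ᶜ := by
      intro hcon
      rcases hcon with h' | h'
      · exact hvi h'
      · exact hvL ⟨h', h⟩
    exact mem_of_adj_isCompOf hK hjK hvSi h
  have hvstari : v ∉ gstar G i := by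
    intro hcon; rcases hcon with h' | h'
    · exact hvi h'
    · exact hvai h'
  have hvstarj : v ∉ gstar G j := by
    intro hcon; rcases hcon with h' | h'
    · exact hvj h'
    · exact hvaj h'
  have hvS : v ∈ (glink G i ∩ glink G j)ᶜ := hvL
  have hiS : i ∈ (glink G i ∩ glink G j)ᶜ := by
    intro hcon; exact G.irrefl hcon.1
  have hjS : j ∈ (glink G i ∩ glink G j)ᶜ := by
    intro hcon; exact G.irrefl hcon.2
  -- the component of v in the complement of the link intersection
  set R := compSet G ((glink G i ∩ glink G j)ᶜ) v hvS with hR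
  have hRcomp := compSet_isCompOf G ((glink G i ∩ glink G j)ᶜ) v hvS
  have hij : i ∈ R ∨ j ∈ R := by
    by_contra hcon
    push_neg at hcon
    exact hsil ⟨i, j, R, hne, hnadj, hRcomp, hcon.1, hcon.2⟩
  rcases hij with hmem | hmem
  · obtain ⟨hi', hreach⟩ := hmem
    obtain ⟨p⟩ := hreach
    rcases walk_lemma hnadj hK hjK hQ hiQ p (Or.inl (Or.inl rfl)) hvstari hvstarj with h | h
    · exact hvK h
    · exact hvQ h
  · obtain ⟨hj', hreach⟩ := hmem
    obtain ⟨p⟩ := hreach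
    rcases walk_lemma hnadj hK hjK hQ hiQ p (Or.inr (Or.inl rfl)) hvstari hvstarj with h | h
    · exact hvK h
    · exact hvQ h
end

section
/- Let Γ be a finite simple graph and let Γ⁺ be the graph obtained from Γ by adjoining one new vertex v_0 adjacent to every vertex of Γ. Then Γ has a SIL if and only if Γ⁺ has a SIL. -/
/-- The graph Γ⁺ obtained from Γ by adjoining a new vertex adjacent to all vertices of Γ. -/
def Gplus {V : Type*} (G : SimpleGraph V) : SimpleGraph (Option V) where
  Adj a b := a ≠ b ∧ ∀ u w : V, a = some u → b = some w → G.Adj u w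
  symm := by
    constructor
    rintro a b ⟨hne, h⟩
    exact ⟨hne.symm, fun u w hb ha => (h w u ha hb).symm⟩
  loopless := by constructor; rintro a ⟨hne, -⟩; exact hne rfl

/-!
`some : V → Option V` embeds Γ into Γ⁺ as an induced subgraph, so connected components of
vertex sets of Γ correspond to those of their images. For `u, w ∈ Γ` the apex lies in both
links in Γ⁺, hence the complement of `L_u ∩ L_w` in Γ⁺ is the image of the one in Γ. Conversely
the apex is adjacent to every vertex, so every non-adjacent pair of Γ⁺ already lies in Γ.
-/

namespace SimpleGraph.Embedding

variable {V W : Type*} {G : SimpleGraph V} {H : SimpleGraph W}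

noncomputable def induceImage (f : G ↪g H) (K : Set V) :
    G.induce K ≃g H.induce (f '' K) where
  toEquiv := Equiv.Set.image f K f.injective
  map_rel_iff' := f.map_adj_iff

theorem connected_induce_image_iff (f : G ↪g H) (K : Set V) :
    (H.induce (f '' K)).Connected ↔ (G.induce K).Connected :=
  (f.induceImage K).connected_iff.symm

theorem isCompOf_image_iff (f : G ↪g H) (s K : Set V) :
    IsCompOf H (f '' s) (f '' K) ↔ IsCompOf G s K := by
  simp only [IsCompOf, Set.image_nonempty, Set.image_subset_image_iff f.injective,
    f.connected_induce_image_iff]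
  refine and_congr_right fun _ => and_congr_right fun _ => and_congr_right fun _ => ?_
  constructor
  · intro hmax K' hKK' hK's hK'
    exact f.injective.image_injective <| hmax _ (Set.image_mono hKK') (Set.image_mono hK's)
      ((f.connected_induce_image_iff K').2 hK')
  · intro hmax K' hKK' hK's hK'
    obtain ⟨K', rfl⟩ := Set.subset_range_iff_exists_image_eq.1
      (hK's.trans (Set.image_subset_range f s))
    rw [Set.image_subset_image_iff f.injective] at hKK' hK's
    rw [f.connected_induce_image_iff] at hK'
    rw [hmax K' hKK' hK's hK']

theorem exists_image_eq_of_isCompOf_image {f : G ↪g H} {s : Set V} {K : Set W}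
    (hK : IsCompOf H (f '' s) K) : ∃ K₀, f '' K₀ = K :=
  Set.subset_range_iff_exists_image_eq.1 (hK.2.1.trans (Set.image_subset_range f s))

end SimpleGraph.Embedding

section Gplus

variable {V : Type*} {G : SimpleGraph V}

@[simp]
theorem gplus_adj_some_some {u w : V} : (Gplus G).Adj (some u) (some w) ↔ G.Adj u w :=
  ⟨fun h => h.2 u w rfl rfl, fun h => ⟨by simpa using h.ne, by rintro _ _ ⟨⟩ ⟨⟩; exact h⟩⟩

@[simp]
theorem gplus_adj_none_some (u : V) : (Gplus G).Adj none (some u) :=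
  ⟨by simp, by rintro _ _ ⟨⟩⟩

@[simp]
theorem gplus_adj_some_none (u : V) : (Gplus G).Adj (some u) none :=
  (gplus_adj_none_some u).symm

variable (G) in
def gplusEmbedding : G ↪g Gplus G where
  toEmbedding := Function.Embedding.some
  map_rel_iff' := gplus_adj_some_some

@[simp]
theorem gplusEmbedding_apply (u : V) : gplusEmbedding G u = some u := rfl

theorem glink_gplus_some (u : V) : glink (Gplus G) (some u) = insert none (some '' glink G u) := by
  ext (_ | x) <;> simp [glink]

theorem compl_glink_inter_gplus (u w : V) :
    (glink (Gplus G) (some u) ∩ glink (Gplus G) (some w))ᶜ =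
      gplusEmbedding G '' (glink G u ∩ glink G w)ᶜ := by
  ext (_ | x) <;> simp [glink_gplus_some]

theorem exists_eq_some_of_not_gplus_adj {a b : Option V} (hab : a ≠ b)
    (hadj : ¬ (Gplus G).Adj a b) : ∃ u w, a = some u ∧ b = some w := by
  cases a <;> cases b <;> simp_all

end Gplus

theorem stmt6_general {V : Type*} (G : SimpleGraph V) :
    HasSIL G ↔ HasSIL (Gplus G) := by
  let f := gplusEmbedding G
  constructor
  · rintro ⟨u, w, R, hne, hadj, hR, hu, hw⟩
    refine ⟨some u, some w, f '' R, by simpa using hne, by simpa using hadj, ?_, ?_, ?_⟩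
    · rwa [compl_glink_inter_gplus, f.isCompOf_image_iff]
    · simpa [f] using hu
    · simpa [f] using hw
  · rintro ⟨a, b, R, hne, hadj, hR, ha, hb⟩
    obtain ⟨u, w, rfl, rfl⟩ := exists_eq_some_of_not_gplus_adj hne hadj
    rw [compl_glink_inter_gplus] at hR
    obtain ⟨R, rfl⟩ := f.exists_image_eq_of_isCompOf_image hR
    refine ⟨u, w, R, by simpa using hne, by simpa using hadj, ?_, ?_, ?_⟩
    · rwa [f.isCompOf_image_iff] at hR
    · simpa [f] using ha
    · simpa [f] using hb

theorem stmt6 {V : Type*} [Fintype V] (G : SimpleGraph V) :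
    HasSIL G ↔ HasSIL (Gplus G) :=
  stmt6_general G
end

section
/- Let W be the graph product of cyclic groups determined by a labeled graph (Γ, m). Then the center of W is the special subgroup generated by the vertices adjacent to every other vertex of Γ, i.e., Z(W) = ⟨{v_i : d(v_i, v_j) ≤ 1 for all j}⟩. -/
/-!
The central vertices give central generators. Conversely, let `i` be a vertex that is not
adjacent to some `j ≠ i`. Then `W` splits as the amalgamated product
`W_{V∖i} *_{W_{V∖{i,j}}} W_{V∖j}`, and both factors are strictly larger than the base, since
a generator of order `m ≠ 1` never lies in the special subgroup of the other vertices (its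
exponent sum modulo `m` vanishes there). In an amalgamated product with two proper factors the
centre lies in the base: by the normal form theorem the sequence of factor indices of a reduced
word depends only on the element, and moving a central element past a well-chosen letter
produces two reduced words for it whose index sequences differ. So the centre lies in
`W_{V∖i}` for every non-central vertex `i`, and retractions onto special subgroups show that
these intersect in the special subgroup of the central vertices.
-/

/-- Defining relations of the graph product of cyclic groups `W(Γ, m)`.
`m i = 0` encodes infinite order (and gives the trivial relation). -/
def grels {N : ℕ} (G : SimpleGraph (Fin N)) (m : Fin N → ℕ) : Set (FreeGroup (Fin N)) :=
  {r | (∃ i, r = FreeGroup.of i ^ m i) ∨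
    ∃ i j, G.Adj i j ∧
      r = FreeGroup.of i * FreeGroup.of j * (FreeGroup.of i)⁻¹ * (FreeGroup.of j)⁻¹}

theorem List.head?_eq_of_cons_eq_append_singleton {α : Type*} {a : α} {l : List α}
    (hl : l ≠ []) (h : a :: l = l ++ [a]) : l.head? = some a := by
  rw [← List.head?_append_of_ne_nil l hl (l₂ := [a]), ← h, List.head?_cons]

namespace Monoid.CoprodI.Word

variable {ι : Type*} {M : ι → Type*} [∀ i, Monoid (M i)]

def snoc (w : Word M) {i : ι} (m : M i) (hm : m ≠ 1)
    (hw : (w.toList.map Sigma.fst).getLast? ≠ some i) : Word M where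
  toList := w.toList ++ [⟨i, m⟩]
  ne_one l hl := by
    rcases List.mem_append.1 hl with hl | hl
    · exact w.ne_one l hl
    · rwa [List.mem_singleton.1 hl]
  chain_ne := by
    refine List.isChain_append.2 ⟨w.chain_ne, List.isChain_singleton _, ?_⟩
    rintro l hl _ ⟨⟩ rfl
    exact hw (by rw [List.getLast?_map, Option.mem_def.1 hl]; rfl)

theorem prod_snoc (w : Word M) {i : ι} (m : M i) (hm : m ≠ 1)
    (hw : (w.toList.map Sigma.fst).getLast? ≠ some i) :
    (w.snoc m hm hw).prod = w.prod * of m := by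
  simp [prod, snoc]

theorem fstIdx_eq_head?_map (w : Word M) :
    w.fstIdx = (w.toList.map Sigma.fst).head? := by
  rw [Word.fstIdx, List.head?_map]

end Monoid.CoprodI.Word

namespace Monoid.PushoutI

open CoprodI

variable {ι : Type*} {G : ι → Type*} [∀ i, Group (G i)] {H : Type*} [Group H]
  {φ : ∀ i, H →* G i}

theorem Reduced.cons {i : ι} {g : G i} {w : Word G} (hg : g ∉ (φ i).range) (hw : Reduced φ w)
    (hgw : w.fstIdx ≠ some i) (hg1 : g ≠ 1) : Reduced φ (Word.cons g w hgw hg1) :=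
  List.forall_mem_cons.2 ⟨hg, hw⟩

theorem Reduced.snoc {i : ι} {g : G i} {w : Word G} (hg : g ∉ (φ i).range) (hw : Reduced φ w)
    (hg1 : g ≠ 1) (hgw : (w.toList.map Sigma.fst).getLast? ≠ some i) :
    Reduced φ (w.snoc g hg1 hgw) :=
  List.forall_mem_append.2 ⟨hw, List.forall_mem_singleton.2 hg⟩

theorem NormalWord.reduced_toWord (d : NormalWord.Transversal φ) (w : NormalWord d) :
    Reduced φ w.toWord := by
  rintro ⟨i, g⟩ hg hrange
  have hself := (d.compl i).equiv_snd_eq_self_iff_mem (g := g) (one_mem _) |>.2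
    (w.normalized i g hg)
  have hone := ((d.compl i).coe_equiv_snd_eq_one_iff_mem (g := g) (d.one_mem i)).2 hrange
  exact w.ne_one _ hg (hself.symm.trans hone)

theorem exists_reduced_eq_base_mul (hφ : ∀ i, Function.Injective (φ i)) (x : PushoutI φ) :
    ∃ (h : H) (w : Word G), Reduced φ w ∧ x = base φ h * ofCoprodI w.prod := by
  classical
  obtain ⟨d⟩ := NormalWord.transversal_nonempty φ hφ
  let w : NormalWord d := x • .empty
  refine ⟨w.head, w.toWord, NormalWord.reduced_toWord d w, ?_⟩
  change x = w.prod
  simp [w]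

theorem Reduced.map_fst_eq_of_base_mul_eq (hφ : ∀ i, Function.Injective (φ i))
    {w₁ w₂ : Word G} (hw₁ : Reduced φ w₁) (hw₂ : Reduced φ w₂) {h₁ h₂ : H}
    (h : base φ h₁ * ofCoprodI w₁.prod = base φ h₂ * ofCoprodI w₂.prod) :
    w₁.toList.map Sigma.fst = w₂.toList.map Sigma.fst := by
  classical
  obtain ⟨d⟩ := NormalWord.transversal_nonempty φ hφ
  obtain ⟨v₁, hv₁, hmap₁⟩ := hw₁.exists_normalWord_prod_eq d
  obtain ⟨v₂, hv₂, hmap₂⟩ := hw₂.exists_normalWord_prod_eq d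
  have hv : h₁ • v₁ = h₂ • v₂ :=
    NormalWord.prod_injective (by simp only [NormalWord.prod_base_smul, hv₁, hv₂, h])
  rw [← hmap₁, ← hmap₂]
  change (h₁ • v₁).toList.map Sigma.fst = (h₂ • v₂).toList.map Sigma.fst
  exact congrArg (fun v : NormalWord d => v.toList.map Sigma.fst) hv

theorem base_mul_prod_notMem_center_of_ends_ne (hφ : ∀ i, Function.Injective (φ i))
    {w : Word G} (hw : Reduced φ w) (hne : w.toList ≠ []) {u : ι} (hu : (φ u).range ≠ ⊤)
    (hhead : w.fstIdx ≠ some u) (hlast : (w.toList.map Sigma.fst).getLast? ≠ some u) (h : H) :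
    base φ h * ofCoprodI w.prod ∉ Subgroup.center (PushoutI φ) := by
  intro hz
  obtain ⟨c, hc⟩ := SetLike.exists_not_mem_of_ne_top _ hu rfl
  have hc1 : c ≠ 1 := fun h1 => hc (h1 ▸ one_mem _)
  set c' := φ u h⁻¹ * c * φ u h
  have hc' : c' ∉ (φ u).range := fun ⟨y, hy⟩ =>
    hc ⟨h * y * h⁻¹, by simp [hy, c', mul_assoc]⟩
  have hc'1 : c' ≠ 1 := fun h1 => hc' (h1 ▸ one_mem _)
  -- `of u c * z` and `z * of u c` have reduced words with index sequences `u :: L` and `L ++ [u]`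
  have hleft : of u c * (base φ h * ofCoprodI w.prod) =
      base φ h * ofCoprodI (Word.cons c' w hhead hc'1).prod := by
    rw [Word.prod_cons, map_mul, ofCoprodI_of, ← of_apply_eq_base φ u, ← mul_assoc,
      ← mul_assoc, ← map_mul, ← map_mul]
    simp [c', mul_assoc]
  have hright : base φ h * ofCoprodI w.prod * of u c =
      base φ h * ofCoprodI (w.snoc c hc1 hlast).prod := by
    rw [Word.prod_snoc, map_mul, ofCoprodI_of, mul_assoc]
  have hmap := (hw.cons hc' hhead hc'1).map_fst_eq_of_base_mul_eq hφ (hw.snoc hc hc1 hlast)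
    (hleft.symm.trans ((Subgroup.mem_center_iff.1 hz _).trans hright))
  simp only [Word.cons, Word.snoc, List.map_cons, List.map_append] at hmap
  exact hhead (by
    rw [Word.fstIdx_eq_head?_map]
    exact List.head?_eq_of_cons_eq_append_singleton (by simpa using hne) hmap)

theorem base_mul_prod_notMem_center_of_getLast?_ne_head? (hφ : ∀ i, Function.Injective (φ i))
    {w : Word G} (hw : Reduced φ w)
    (hL : (w.toList.map Sigma.fst).getLast? ≠ (w.toList.map Sigma.fst).head?) (h : H) :
    base φ h * ofCoprodI w.prod ∉ Subgroup.center (PushoutI φ) := by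
  cases w using Word.consRecOn with
  | empty => exact absurd rfl hL
  | cons k g rest hfst hg1 =>
    intro hz
    have hrest_ne : rest.toList ≠ [] := by
      rintro hnil
      exact hL (by simp [Word.cons, hnil])
    have hlast : (rest.toList.map Sigma.fst).getLast? ≠ some k := by
      intro hk
      apply hL
      simp only [Word.cons, List.map_cons, List.head?_cons, List.getLast?_cons, hk]
      rfl
    have hg : g ∉ (φ k).range := hw _ List.mem_cons_self
    have hrest : Reduced φ rest := fun l hl => hw l (List.mem_cons_of_mem _ hl)
    set g' := φ k h * g
    have hg' : g' ∉ (φ k).range := fun ⟨y, hy⟩ => hg ⟨h⁻¹ * y, by simp [hy, g']⟩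
    have hg'1 : g' ≠ 1 := fun h1 => hg' (h1 ▸ one_mem _)
    -- conjugating by the first letter moves it to the end of the word
    have hz_eq : base φ h * ofCoprodI (Word.cons g rest hfst hg1).prod =
        (base φ h * of k g) * ofCoprodI rest.prod := by
      rw [Word.prod_cons, map_mul, ofCoprodI_of, mul_assoc]
    have hcomm : (base φ h * of k g) * ofCoprodI rest.prod =
        ofCoprodI rest.prod * (base φ h * of k g) := by
      rw [hz_eq] at hz
      exact mul_left_cancel ((Subgroup.mem_center_iff.1 hz _).trans (mul_assoc _ _ _))
    have hrot : ofCoprodI rest.prod * (base φ h * of k g) =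
        base φ 1 * ofCoprodI (rest.snoc g' hg'1 hlast).prod := by
      rw [map_one, one_mul, Word.prod_snoc, map_mul, ofCoprodI_of, ← of_apply_eq_base φ k,
        ← map_mul]
    have hmap := hw.map_fst_eq_of_base_mul_eq hφ (hrest.snoc hg' hg'1 hlast)
      (hz_eq.trans (hcomm.trans hrot))
    simp only [Word.cons, Word.snoc, List.map_cons, List.map_append] at hmap
    exact hfst (by
      rw [Word.fstIdx_eq_head?_map]
      exact List.head?_eq_of_cons_eq_append_singleton (by simpa using hrest_ne) hmap)

theorem center_le_base_range (hφ : ∀ i, Function.Injective (φ i)) {i j : ι} (hij : i ≠ j)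
    (hi : (φ i).range ≠ ⊤) (hj : (φ j).range ≠ ⊤) :
    Subgroup.center (PushoutI φ) ≤ (base φ).range := by
  intro z hz
  obtain ⟨h, w, hw, rfl⟩ := exists_reduced_eq_base_mul hφ z
  by_cases hnil : w.toList = []
  · exact ⟨h, by simp [Word.prod, hnil]⟩
  by_cases hL : (w.toList.map Sigma.fst).getLast? = (w.toList.map Sigma.fst).head?
  · obtain ⟨k, hk⟩ := Option.ne_none_iff_exists'.1 (by simpa using hnil :
      (w.toList.map Sigma.fst).head? ≠ none)
    have hfalse : ∀ u, (φ u).range ≠ ⊤ → k ≠ u → False := fun u hu hku =>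
      base_mul_prod_notMem_center_of_ends_ne hφ hw hnil hu
        (by rw [Word.fstIdx_eq_head?_map, hk]; simpa using hku)
        (by rw [hL, hk]; simpa using hku) h hz
    by_cases hki : k = i
    · exact (hfalse j hj (hki ▸ hij)).elim
    · exact (hfalse i hi hki).elim
  · exact absurd hz (base_mul_prod_notMem_center_of_getLast?_ne_head? hφ hw hL h)

end Monoid.PushoutI

namespace GraphProduct

open PresentedGroup

variable {N : ℕ} (G : SimpleGraph (Fin N)) (m : Fin N → ℕ)

theorem lift_eq_one_of_mem_grels {K : Type*} [Group K] {f : Fin N → K}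
    (hpow : ∀ i, f i ^ m i = 1) (hcomm : ∀ i j, G.Adj i j → Commute (f i) (f j)) :
    ∀ r ∈ grels G m, FreeGroup.lift f r = 1 := by
  rintro r (⟨i, rfl⟩ | ⟨i, j, hij, rfl⟩)
  · simp [hpow]
  · simp [(hcomm i j hij).eq]

theorem of_pow_eq_one (i : Fin N) : (of i : PresentedGroup (grels G m)) ^ m i = 1 := by
  rw [of, ← map_pow]
  exact one_of_mem (Or.inl ⟨i, rfl⟩)

theorem commute_of_adj {i j : Fin N} (h : G.Adj i j) :
    Commute (of i : PresentedGroup (grels G m)) (of j) := by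
  have hrel : (of i * of j * (of i)⁻¹ * (of j)⁻¹ : PresentedGroup (grels G m)) = 1 := by
    simp only [of, ← map_mul, ← map_inv]
    exact one_of_mem (Or.inr ⟨i, j, h, rfl⟩)
  rw [mul_inv_eq_one, mul_inv_eq_iff_eq_mul] at hrel
  exact hrel

def special (S : Set (Fin N)) : Subgroup (PresentedGroup (grels G m)) :=
  Subgroup.closure (of '' S)

variable {G m}

theorem of_mem_special {S : Set (Fin N)} {k : Fin N} (hk : k ∈ S) : of k ∈ special G m S :=
  Subgroup.subset_closure ⟨k, hk, rfl⟩

theorem special_mono {S T : Set (Fin N)} (h : S ⊆ T) : special G m S ≤ special G m T :=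
  Subgroup.closure_mono (Set.image_mono h)

variable (G m)

theorem special_univ : special G m Set.univ = ⊤ := by
  rw [special, Set.image_univ, closure_range_of]

open scoped Classical in
noncomputable def retraction (S : Set (Fin N)) :
    PresentedGroup (grels G m) →* PresentedGroup (grels G m) :=
  toGroup (f := fun k => if k ∈ S then of k else 1) <| lift_eq_one_of_mem_grels G m
    (fun k => by split_ifs <;> simp [of_pow_eq_one])
    (fun a b hab => by split_ifs <;> simp [commute_of_adj G m hab])

open scoped Classical in
theorem retraction_of (S : Set (Fin N)) (k : Fin N) :
    retraction G m S (of k) = if k ∈ S then of k else 1 :=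
  toGroup.of _

variable {G m}

theorem retraction_apply_of_mem {S : Set (Fin N)} {w : PresentedGroup (grels G m)}
    (hw : w ∈ special G m S) : retraction G m S w = w := by
  induction hw using Subgroup.closure_induction with
  | mem x hx =>
    obtain ⟨k, hk, rfl⟩ := hx
    rw [retraction_of, if_pos hk]
  | one => exact map_one _
  | mul x y _ _ hx hy => rw [map_mul, hx, hy]
  | inv x _ hx => rw [map_inv, hx]

theorem retraction_mem (S : Set (Fin N)) (w : PresentedGroup (grels G m)) :
    retraction G m S w ∈ special G m S := by
  refine generated_by _ ((special G m S).comap (retraction G m S)) (fun k => ?_) w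
  classical
  rw [Subgroup.mem_comap, retraction_of]
  split_ifs with hk
  · exact of_mem_special hk
  · exact one_mem _

theorem retraction_comp (S T : Set (Fin N)) :
    (retraction G m S).comp (retraction G m T) = retraction G m (S ∩ T) := by
  classical
  refine PresentedGroup.ext fun k => ?_
  simp only [MonoidHom.comp_apply, retraction_of, Set.mem_inter_iff]
  by_cases hT : k ∈ T <;> by_cases hS : k ∈ S <;> simp [hS, hT, retraction_of]

theorem mem_special_inter {S T : Set (Fin N)} {w : PresentedGroup (grels G m)}
    (hS : w ∈ special G m S) (hT : w ∈ special G m T) : w ∈ special G m (S ∩ T) := by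
  rw [← retraction_apply_of_mem hS, ← retraction_apply_of_mem hT, ← MonoidHom.comp_apply,
    retraction_comp]
  exact retraction_mem _ _

theorem mem_special_of_forall_notMem {S : Set (Fin N)} {w : PresentedGroup (grels G m)}
    (hw : ∀ i ∉ S, w ∈ special G m {i}ᶜ) : w ∈ special G m S := by
  suffices h : ∀ F : Finset (Fin N), w ∈ special G m (S ∪ (↑F)ᶜ) by
    simpa using h Finset.univ
  intro F
  induction F using Finset.induction_on with
  | empty => simp [special_univ]
  | insert a F _ ih =>
    by_cases ha : a ∈ S
    · refine special_mono (fun x hx => ?_) ih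
      by_cases hxa : x = a <;> simp_all
    · refine special_mono (fun x hx => ?_) (mem_special_inter ih (hw a ha))
      simp_all

variable (G m) in
noncomputable def exponentSum (i : Fin N) :
    PresentedGroup (grels G m) →* Multiplicative (ZMod (m i)) :=
  toGroup (f := Pi.mulSingle i (Multiplicative.ofAdd 1)) <| lift_eq_one_of_mem_grels G m
    (fun k => by
      rcases eq_or_ne k i with rfl | hk
      · simp [← ofAdd_nsmul]
      · simp [hk])
    (fun _ _ _ => Commute.all _ _)

theorem of_notMem_special {S : Set (Fin N)} {i : Fin N} (hi : i ∉ S) (hmi : m i ≠ 1) :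
    of i ∉ special G m S := by
  intro hmem
  have hker : special G m S ≤ (exponentSum G m i).ker := by
    refine (Subgroup.closure_le _).2 ?_
    rintro _ ⟨k, hk, rfl⟩
    simp [exponentSum, toGroup.of, show k ≠ i from fun h => hi (h ▸ hk)]
  have := hker hmem
  simp [exponentSum, toGroup.of, ZMod.one_eq_zero_iff, hmi] at this

theorem of_mem_center {i : Fin N} (hi : ∀ j, j ≠ i → G.Adj i j) :
    of i ∈ Subgroup.center (PresentedGroup (grels G m)) := by
  suffices h : Subgroup.centralizer {of i} = ⊤ from
    Subgroup.centralizer_eq_top_iff_subset.1 h rfl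
  refine eq_top_iff.2 (by
    rw [← closure_range_of, Subgroup.closure_le]
    rintro _ ⟨k, rfl⟩ _ rfl
    rcases eq_or_ne k i with rfl | hk
    · rfl
    · exact (commute_of_adj G m (hi k hk)).eq)

open Monoid

section Amalgam

variable (G m) (S T : Set (Fin N))

/- If every vertex lies in `S` or `T` and no edge joins `S \ T` to `T \ S`, then `W` is the
amalgamated product of `W_S` (index `true`) and `W_T` (index `false`) over `W_{S ∩ T}`;
`toAmalgam` is this isomorphism and `ofAmalgam` its inverse. -/

def inclusionInter (b : Bool) : special G m (S ∩ T) →* special G m (cond b S T) :=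
  Subgroup.inclusion <| special_mono <| by
    cases b
    exacts [Set.inter_subset_right, Set.inter_subset_left]

variable {G m S T}

section
variable (hST : ∀ k, k ∈ S ∨ k ∈ T)
include hST

variable (G m) in
open scoped Classical in
noncomputable def amalgamGen (k : Fin N) : PushoutI (inclusionInter G m S T) :=
  if hk : k ∈ S then PushoutI.of true ⟨of k, of_mem_special hk⟩
  else PushoutI.of false ⟨of k, of_mem_special ((hST k).resolve_left hk)⟩

theorem amalgamGen_eq {b : Bool} {k : Fin N} (hk : k ∈ cond b S T) :
    amalgamGen G m hST k = PushoutI.of b ⟨of k, of_mem_special hk⟩ := by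
  cases b
  · by_cases hS : k ∈ S
    · rw [amalgamGen, dif_pos hS]
      exact (PushoutI.of_apply_eq_base (inclusionInter G m S T) true
        ⟨of k, of_mem_special ⟨hS, hk⟩⟩).trans (PushoutI.of_apply_eq_base _ false _).symm
    · rw [amalgamGen, dif_neg hS]
  · rw [amalgamGen, dif_pos (show k ∈ S from hk)]

theorem exists_mem_factor (k : Fin N) : ∃ b, k ∈ cond b S T :=
  (hST k).elim (fun h => ⟨true, h⟩) (fun h => ⟨false, h⟩)

theorem exists_mem_factor_of_adj (hadj : ∀ a ∉ T, ∀ c ∉ S, ¬ G.Adj a c) {a c : Fin N}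
    (h : G.Adj a c) : ∃ b, a ∈ cond b S T ∧ c ∈ cond b S T := by
  by_cases ha : a ∈ S <;> by_cases hc : c ∈ S
  · exact ⟨true, ha, hc⟩
  · exact ⟨false, not_not.1 fun haT => hadj a haT c hc h, (hST c).resolve_left hc⟩
  · exact ⟨false, (hST a).resolve_left ha, not_not.1 fun hcT => hadj c hcT a ha h.symm⟩
  · exact ⟨false, (hST a).resolve_left ha, (hST c).resolve_left hc⟩

variable (hadj : ∀ a ∉ T, ∀ c ∉ S, ¬ G.Adj a c)
include hadj

variable (m) in
noncomputable def toAmalgam : PresentedGroup (grels G m) →* PushoutI (inclusionInter G m S T) :=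
  toGroup (f := amalgamGen G m hST) <| lift_eq_one_of_mem_grels G m
    (fun k => by
      obtain ⟨b, hb⟩ := exists_mem_factor hST k
      rw [amalgamGen_eq hST hb, ← map_pow]
      exact (congrArg _ (Subtype.ext (of_pow_eq_one G m k))).trans (map_one _))
    (fun a c h => by
      obtain ⟨b, ha, hc⟩ := exists_mem_factor_of_adj hST hadj h
      rw [amalgamGen_eq hST ha, amalgamGen_eq hST hc]
      exact Commute.map (Subtype.ext (commute_of_adj G m h).eq :
        Commute (⟨of a, of_mem_special ha⟩ : special G m (cond b S T)) ⟨of c, _⟩) _)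

omit hST hadj in
variable (G m S T) in
noncomputable def ofAmalgam : PushoutI (inclusionInter G m S T) →* PresentedGroup (grels G m) :=
  PushoutI.lift (fun b => (special G m (cond b S T)).subtype) (special G m (S ∩ T)).subtype
    (fun _ => MonoidHom.ext fun _ => rfl)

theorem ofAmalgam_toAmalgam (w : PresentedGroup (grels G m)) :
    ofAmalgam G m S T (toAmalgam m hST hadj w) = w := by
  suffices h : (ofAmalgam G m S T).comp (toAmalgam m hST hadj) = MonoidHom.id _ from
    DFunLike.congr_fun h w
  refine PresentedGroup.ext fun k => ?_
  obtain ⟨b, hb⟩ := exists_mem_factor hST k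
  rw [MonoidHom.comp_apply, toAmalgam, toGroup.of, amalgamGen_eq hST hb, ofAmalgam,
    PushoutI.lift_of]
  rfl

theorem toAmalgam_of_mem {b : Bool} {w : PresentedGroup (grels G m)}
    (hw : w ∈ special G m (cond b S T)) :
    toAmalgam m hST hadj w = PushoutI.of b ⟨w, hw⟩ := by
  have hrange : w ∈ (PushoutI.of (φ := inclusionInter G m S T) b).range.comap
      (toAmalgam m hST hadj) := by
    refine (Subgroup.closure_le _).2 ?_ hw
    rintro _ ⟨k, hk, rfl⟩
    exact ⟨_, (amalgamGen_eq hST hk).symm.trans (toGroup.of _).symm⟩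
  obtain ⟨g, hg⟩ := hrange
  have hgw : (g : PresentedGroup (grels G m)) = w := by
    have := congrArg (ofAmalgam G m S T) hg
    rwa [ofAmalgam_toAmalgam, ofAmalgam, PushoutI.lift_of] at this
  rw [← hg]
  exact congrArg _ (Subtype.ext hgw)

theorem toAmalgam_surjective : Function.Surjective (toAmalgam m hST hadj) := by
  intro x
  induction x using PushoutI.induction_on with
  | of b g => exact ⟨g, toAmalgam_of_mem hST hadj g.2⟩
  | base h =>
    exact ⟨h, (toAmalgam_of_mem hST hadj (b := true) (inclusionInter G m S T true h).2).trans
      (PushoutI.of_apply_eq_base _ true h)⟩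
  | mul x y hx hy =>
    obtain ⟨v, rfl⟩ := hx
    obtain ⟨w, rfl⟩ := hy
    exact ⟨v * w, map_mul _ _ _⟩

end

theorem inclusionInter_range_ne_top {b : Bool} {k : Fin N} (hk : k ∈ cond b S T)
    (hkST : k ∉ S ∩ T) (hmk : m k ≠ 1) : (inclusionInter G m S T b).range ≠ ⊤ := by
  intro htop
  obtain ⟨y, hy⟩ : (⟨of k, of_mem_special hk⟩ : special G m (cond b S T)) ∈
      (inclusionInter G m S T b).range := htop ▸ Subgroup.mem_top _
  exact of_notMem_special hkST hmk (congrArg Subtype.val hy ▸ y.2)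

theorem center_le_special_inter (hST : ∀ k, k ∈ S ∨ k ∈ T)
    (hadj : ∀ a ∉ T, ∀ c ∉ S, ¬ G.Adj a c) {a c : Fin N} (ha : a ∈ S) (haT : a ∉ T)
    (hma : m a ≠ 1) (hc : c ∈ T) (hcS : c ∉ S) (hmc : m c ≠ 1) :
    Subgroup.center (PresentedGroup (grels G m)) ≤ special G m (S ∩ T) := by
  intro z hz
  have hcenter : toAmalgam m hST hadj z ∈ Subgroup.center _ :=
    Subgroup.mem_center_iff.2 fun x => by
      obtain ⟨w, rfl⟩ := toAmalgam_surjective hST hadj x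
      rw [← map_mul, ← map_mul, Subgroup.mem_center_iff.1 hz w]
  obtain ⟨y, hy⟩ := PushoutI.center_le_base_range (φ := inclusionInter G m S T)
    (fun b => Subgroup.inclusion_injective _) (by decide : true ≠ false)
    (inclusionInter_range_ne_top (b := true) ha (fun h => haT h.2) hma)
    (inclusionInter_range_ne_top (b := false) hc (fun h => hcS h.1) hmc) hcenter
  rw [← ofAmalgam_toAmalgam hST hadj z, ← hy, ofAmalgam, PushoutI.lift_base]
  exact y.2

theorem center_le_special_compl_singleton (hm : ∀ k, m k ≠ 1) {i j : Fin N} (hij : i ≠ j)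
    (hadj : ¬ G.Adj i j) : Subgroup.center (PresentedGroup (grels G m)) ≤ special G m {i}ᶜ :=
  (center_le_special_inter (S := {i}ᶜ) (T := {j}ᶜ)
    (fun k => or_iff_not_imp_left.2 fun hk => by simp_all)
    (fun a ha c hc => by simp_all [G.adj_comm])
    (Set.mem_compl_singleton_iff.2 hij.symm) (by simp) (hm j)
    (Set.mem_compl_singleton_iff.2 hij) (by simp) (hm i)).trans
    (special_mono Set.inter_subset_left)

end Amalgam

theorem center_eq_special (hm : ∀ k, m k ≠ 1) :
    Subgroup.center (PresentedGroup (grels G m)) =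
      special G m {i | ∀ j, j ≠ i → G.Adj i j} := by
  refine le_antisymm (fun z hz => mem_special_of_forall_notMem fun i hi => ?_) ?_
  · obtain ⟨j, hji, hij⟩ : ∃ j, j ≠ i ∧ ¬ G.Adj i j := by simpa using hi
    exact center_le_special_compl_singleton hm hji.symm hij hz
  · refine (Subgroup.closure_le _).2 ?_
    rintro _ ⟨i, hi, rfl⟩
    exact of_mem_center hi

end GraphProduct

theorem stmt9 {N : ℕ} (G : SimpleGraph (Fin N)) (m : Fin N → ℕ)
    (hm : ∀ i, m i = 0 ∨ IsPrimePow (m i)) :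
    Subgroup.center (PresentedGroup (grels G m)) =
      Subgroup.closure
        {x : PresentedGroup (grels G m) |
          ∃ i : Fin N, (∀ j : Fin N, j ≠ i → G.Adj i j) ∧ x = PresentedGroup.of i} := by
  have hm1 : ∀ i, m i ≠ 1 := fun i => (hm i).elim (by omega) IsPrimePow.ne_one
  rw [GraphProduct.center_eq_special hm1, GraphProduct.special]
  congr 1
  ext x
  simp [eq_comm]
end

section
/- Let W be a graph product of cyclic groups on graph Γ and suppose vertices v_i, v_j with d(v_i, v_j) ≥ 2 admit a common component R that is a connected component of both Γ \ S_i and Γ \ S_j. Then the partial conjugations χ_{iR} and χ_{jR} do not commute; indeed for any vertex v_r ∈ R, (χ_{iR} χ_{jR})(v_r) = (v_j v_i) v_r (v_j v_i)^{-1} while (χ_{jR} χ_{iR})(v_r) = (v_i v_j) v_r (v_i v_j)^{-1}, and these differ. -/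
/-- `φ` is the partial conjugation with operating letter `v i` and domain `K`. -/
def IsPartialConj {N : ℕ} (G : SimpleGraph (Fin N)) (m : Fin N → ℕ) (i : Fin N)
    (K : Set (Fin N)) (φ : MulAut (PresentedGroup (grels G m))) : Prop :=
  (∀ k ∈ K, φ (PresentedGroup.of k) =
      PresentedGroup.of i * PresentedGroup.of k * (PresentedGroup.of i)⁻¹) ∧
  (∀ k ∉ K, φ (PresentedGroup.of k) = PresentedGroup.of k)

/-! ### Auxiliary permutations -/

section Perms

variable (α β γ : ℕ)

/-- Shift the first coordinate. -/
def pA : Equiv.Perm (ZMod α × ZMod β × ZMod γ) where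
  toFun p := (p.1 + 1, p.2)
  invFun p := (p.1 - 1, p.2)
  left_inv p := by simp
  right_inv p := by simp

/-- Shift the second coordinate on the `0` column. -/
def pB : Equiv.Perm (ZMod α × ZMod β × ZMod γ) where
  toFun p := (p.1, (if p.1 = 0 then p.2.1 + 1 else p.2.1), p.2.2)
  invFun p := (p.1, (if p.1 = 0 then p.2.1 - 1 else p.2.1), p.2.2)
  left_inv p := by rcases p with ⟨x, y, z⟩; by_cases h : x = 0 <;> simp [h]
  right_inv p := by rcases p with ⟨x, y, z⟩; by_cases h : x = 0 <;> simp [h]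

/-- Shift the third coordinate at the `(0,0)` position. -/
def pC : Equiv.Perm (ZMod α × ZMod β × ZMod γ) where
  toFun p := (p.1, p.2.1, if p.1 = 0 ∧ p.2.1 = 0 then p.2.2 + 1 else p.2.2)
  invFun p := (p.1, p.2.1, if p.1 = 0 ∧ p.2.1 = 0 then p.2.2 - 1 else p.2.2)
  left_inv p := by
    rcases p with ⟨x, y, z⟩; by_cases h : x = 0 ∧ y = 0 <;> simp [h]
  right_inv p := by
    rcases p with ⟨x, y, z⟩; by_cases h : x = 0 ∧ y = 0 <;> simp [h]

lemma pA_pow (n : ℕ) : ∀ p : ZMod α × ZMod β × ZMod γ,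
    (pA α β γ ^ n) p = (p.1 + n, p.2) := by
  induction n with
  | zero => simp
  | succ n ih =>
    intro p
    rw [pow_succ, Equiv.Perm.mul_apply, ih]
    simp only [pA, Equiv.coe_fn_mk]
    push_cast
    exact Prod.ext (by ring) rfl

lemma pB_pow (n : ℕ) : ∀ p : ZMod α × ZMod β × ZMod γ,
    (pB α β γ ^ n) p = (p.1, (if p.1 = 0 then p.2.1 + n else p.2.1), p.2.2) := by
  induction n with
  | zero => simp
  | succ n ih =>
    intro p
    rw [pow_succ, Equiv.Perm.mul_apply, ih]
    simp only [pB, Equiv.coe_fn_mk]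
    by_cases h : p.1 = 0 <;> simp [h] <;> push_cast <;> ring_nf

lemma pC_pow (n : ℕ) : ∀ p : ZMod α × ZMod β × ZMod γ,
    (pC α β γ ^ n) p =
      (p.1, p.2.1, if p.1 = 0 ∧ p.2.1 = 0 then p.2.2 + n else p.2.2) := by
  induction n with
  | zero => simp
  | succ n ih =>
    intro p
    rw [pow_succ, Equiv.Perm.mul_apply, ih]
    simp only [pC, Equiv.coe_fn_mk]
    by_cases h : p.1 = 0 ∧ p.2.1 = 0 <;> simp [h] <;> push_cast <;> ring_nf

lemma pA_order : pA α β γ ^ α = 1 := by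
  apply Equiv.ext; intro p
  rw [pA_pow, ZMod.natCast_self, add_zero]; rfl

lemma pB_order : pB α β γ ^ β = 1 := by
  apply Equiv.ext; intro p
  rw [pB_pow, ZMod.natCast_self, add_zero, ite_self]; rfl

lemma pC_order : pC α β γ ^ γ = 1 := by
  apply Equiv.ext; intro p
  rw [pC_pow, ZMod.natCast_self, add_zero, ite_self]; rfl

end Perms

lemma zmod_one_ne_zero {n : ℕ} (h : n ≠ 1) : (1 : ZMod n) ≠ 0 := by
  have : Nontrivial (ZMod n) := by
    match n, h with
    | 0, _ => exact inferInstanceAs (Nontrivial ℤ)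
    | (k + 2), _ =>
      have : Fact (1 < k + 2) := ⟨by omega⟩
      infer_instance
  exact one_ne_zero

theorem stmt14 {N : ℕ} (G : SimpleGraph (Fin N)) (m : Fin N → ℕ)
    (hm : ∀ i, m i = 0 ∨ IsPrimePow (m i))
    (i j : Fin N) (hne : i ≠ j) (hnadj : ¬ G.Adj i j)
    (R : Set (Fin N))
    (hRi : IsCompOf G ((gstar G i)ᶜ) R) (hRj : IsCompOf G ((gstar G j)ᶜ) R)
    (φ ψ : MulAut (PresentedGroup (grels G m)))
    (hφ : IsPartialConj G m i R φ) (hψ : IsPartialConj G m j R ψ) :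
    φ * ψ ≠ ψ * φ ∧
    ∀ r ∈ R,
      (φ * ψ) (PresentedGroup.of r) =
          (PresentedGroup.of j * PresentedGroup.of i) * PresentedGroup.of r *
            (PresentedGroup.of j * PresentedGroup.of i)⁻¹ ∧
      (ψ * φ) (PresentedGroup.of r) =
          (PresentedGroup.of i * PresentedGroup.of j) * PresentedGroup.of r *
            (PresentedGroup.of i * PresentedGroup.of j)⁻¹ ∧
      (φ * ψ) (PresentedGroup.of r) ≠ (ψ * φ) (PresentedGroup.of r) := by
  -- basic membership facts
  have hiR : i ∉ R := fun h => hRi.2.1 h (Or.inl rfl)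
  have hjR : j ∉ R := fun h => hRj.2.1 h (Or.inl rfl)
  have hri : ∀ r ∈ R, r ≠ i ∧ ¬ G.Adj i r := by
    intro r hr
    have := hRi.2.1 hr
    simp only [Set.mem_compl_iff, gstar, Set.mem_setOf_eq, not_or] at this
    exact this
  have hrj : ∀ r ∈ R, r ≠ j ∧ ¬ G.Adj j r := by
    intro r hr
    have := hRj.2.1 hr
    simp only [Set.mem_compl_iff, gstar, Set.mem_setOf_eq, not_or] at this
    exact this
  -- the two computed values
  have hval1 : ∀ r ∈ R, (φ * ψ) (PresentedGroup.of r) =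
      (PresentedGroup.of j * PresentedGroup.of i) * PresentedGroup.of r *
        (PresentedGroup.of j * PresentedGroup.of i)⁻¹ := by
    intro r hr
    rw [MulAut.mul_apply, hψ.1 r hr, map_mul, map_mul, map_inv,
      hφ.2 j hjR, hφ.1 r hr]
    group
  have hval2 : ∀ r ∈ R, (ψ * φ) (PresentedGroup.of r) =
      (PresentedGroup.of i * PresentedGroup.of j) * PresentedGroup.of r *
        (PresentedGroup.of i * PresentedGroup.of j)⁻¹ := by
    intro r hr
    rw [MulAut.mul_apply, hφ.1 r hr, map_mul, map_mul, map_inv,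
      hψ.2 i hiR, hψ.1 r hr]
    group
  -- the key inequality, via a concrete representation
  have key : ∀ r ∈ R,
      (PresentedGroup.of j * PresentedGroup.of i) * PresentedGroup.of r *
        (PresentedGroup.of j * PresentedGroup.of i)⁻¹ ≠
      ((PresentedGroup.of i * PresentedGroup.of j) * PresentedGroup.of r *
        (PresentedGroup.of i * PresentedGroup.of j)⁻¹ :
          PresentedGroup (grels G m)) := by
    intro r hr
    obtain ⟨hrine, hrinadj⟩ := hri r hr
    obtain ⟨hrjne, hrjnadj⟩ := hrj r hr
    have hmne1 : ∀ k : Fin N, m k ≠ 1 := by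
      intro k
      rcases hm k with h | h
      · omega
      · have := h.one_lt; omega
    have hα : (1 : ZMod (m i)) ≠ 0 := zmod_one_ne_zero (hmne1 i)
    have hβ : (1 : ZMod (m j)) ≠ 0 := zmod_one_ne_zero (hmne1 j)
    have hγ : (1 : ZMod (m r)) ≠ 0 := zmod_one_ne_zero (hmne1 r)
    set α := m i
    set β := m j
    set γ := m r
    set f : Fin N → Equiv.Perm (ZMod α × ZMod β × ZMod γ) := fun k =>
      if k = i then pA α β γ else if k = j then pB α β γ else
        if k = r then pC α β γ else 1 with hf
    have hrels : ∀ w ∈ grels G m, FreeGroup.lift f w = 1 := by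
      rintro w (⟨k, rfl⟩ | ⟨k, l, hadj, rfl⟩)
      · rw [map_pow, FreeGroup.lift_apply_of]
        by_cases h1 : k = i
        · subst h1; simp only [hf, if_pos rfl]; exact pA_order α β γ
        · by_cases h2 : k = j
          · subst h2; simp only [hf, if_neg h1, if_pos rfl]; exact pB_order α β γ
          · by_cases h3 : k = r
            · subst h3
              simp only [hf, if_neg h1, if_neg h2, if_pos rfl]
              exact pC_order α β γ
            · simp [hf, h1, h2, h3]
      · have h1 : f k = 1 ∨ f l = 1 := by
          by_contra hcon
          push_neg at hcon
          have hk : k = i ∨ k = j ∨ k = r := by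
            by_contra hk
            push_neg at hk
            exact hcon.1 (by simp [hf, hk.1, hk.2.1, hk.2.2])
          have hl : l = i ∨ l = j ∨ l = r := by
            by_contra hl
            push_neg at hl
            exact hcon.2 (by simp [hf, hl.1, hl.2.1, hl.2.2])
          rcases hk with rfl | rfl | rfl <;> rcases hl with rfl | rfl | rfl <;>
            first
              | exact G.irrefl hadj
              | exact hnadj hadj
              | exact hnadj (G.adj_symm hadj)
              | exact hrinadj hadj
              | exact hrinadj (G.adj_symm hadj)
              | exact hrjnadj hadj
              | exact hrjnadj (G.adj_symm hadj)
        simp only [map_mul, map_inv, FreeGroup.lift_apply_of]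
        rcases h1 with h | h <;> simp [h]
    set F := PresentedGroup.toGroup hrels with hF
    intro heq
    have heq2 := congrArg F heq
    have hFi : F (PresentedGroup.of i) = pA α β γ := by
      rw [hF, PresentedGroup.toGroup.of]; simp [hf]
    have hFj : F (PresentedGroup.of j) = pB α β γ := by
      rw [hF, PresentedGroup.toGroup.of]; simp [hf, hne.symm]
    have hFr : F (PresentedGroup.of r) = pC α β γ := by
      rw [hF, PresentedGroup.toGroup.of]; simp [hf, hrine, hrjne]
    simp only [map_mul, map_inv, hFi, hFj, hFr] at heq2
    have heq3 := congrFun (congrArg (fun (e : Equiv.Perm (ZMod α × ZMod β × ZMod γ)) =>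
      (e : ZMod α × ZMod β × ZMod γ → ZMod α × ZMod β × ZMod γ)) heq2)
      ((1 : ZMod α), (1 : ZMod β), (0 : ZMod γ))
    simp only [mul_inv_rev, Equiv.Perm.mul_apply, Equiv.Perm.inv_def,
      pA, pB, pC, Equiv.coe_fn_mk, Equiv.coe_fn_symm_mk] at heq3
    simp only [hα, hβ, if_false, if_neg, sub_self, if_pos rfl, sub_add_cancel,
      add_sub_cancel_right] at heq3
    norm_num [hα, hβ] at heq3
    exact hγ heq3.symm
  refine ⟨?_, fun r hr => ⟨hval1 r hr, hval2 r hr, ?_⟩⟩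
  · obtain ⟨r, hr⟩ := hRi.1
    intro h
    apply key r hr
    rw [← hval1 r hr, ← hval2 r hr, h]
  · rw [hval1 r hr, hval2 r hr]
    exact key r hr
end

section
/- Let W be a graph product of cyclic groups on graph Γ and suppose vertices v_i, v_j with d(v_i, v_j) ≥ 2 admit a set R that is a connected component of both Γ \ S_i and Γ \ S_j. Then for every positive integer n and every vertex v_r ∈ R, (χ_{iR} χ_{jR})^n(v_r) = (v_j v_i)^n v_r (v_j v_i)^{-n} and (χ_{iR} χ_{jR})^n(v_i) = v_i; consequently no positive power of χ_{iR} χ_{jR} is an inner automorphism of W. -/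
/-
The first two claims are a direct computation: `φ * ψ` fixes `v_i` and `v_j` and conjugates every
`v_r` with `r ∈ R` by `v_j v_i`.

For the third, pick `r ∈ R`; then `{v_i, v_j, v_r}` is an independent set, so sending `v_i, v_j` to
the generators `a, b` of the corresponding factors of the free product `Q` of all vertex groups,
`v_r` to a lamp at `1` of the regular wreath product `ℤ/m_r ≀ Q`, and every other vertex to `1`
defines a homomorphism `W → ℤ/m_r ≀ Q`. If `(φ * ψ) ^ n` were conjugation by `g`, the image of `g`
would conjugate that lamp as `(ba)^n` does, which pins its `Q`-coordinate to `(ba)^n`, and it would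
commute with `a`. But in the free product `a` does not commute with `(ba)^n`: the reduced words of
`(ab)^n` and `(ba)^n` start with different letters.
-/

namespace Monoid.CoprodI

variable {ι : Type*} [DecidableEq ι] {M : ι → Type*} [∀ k, Group (M k)] [∀ k, DecidableEq (M k)]
  {i j : ι} {α : M i} {β : M j}

theorem fstIdx_pow_succ_of_mul_of_smul_empty (hij : i ≠ j) (hα : α ≠ 1) (hβ : β ≠ 1) (n : ℕ) :
    (((of α * of β) ^ (n + 1)) • (Word.empty : Word M)).fstIdx = some i := by
  have step : ∀ w : Word M, w.fstIdx ≠ some j → ((of α * of β) • w).fstIdx = some i := by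
    intro w hw
    rw [mul_smul, ← Word.cons_eq_smul (h1 := hw) (h2 := hβ),
      ← Word.cons_eq_smul (h1 := by simp [Word.fstIdx_cons, hij.symm]) (h2 := hα),
      Word.fstIdx_cons]
  induction n with
  | zero => simpa using step Word.empty (by simp [Word.fstIdx])
  | succ n ih => rw [pow_succ', mul_smul]; exact step _ (by simp [ih, hij])

theorem pow_of_mul_of_ne (hij : i ≠ j) (hα : α ≠ 1) (hβ : β ≠ 1) {n : ℕ} (hn : n ≠ 0) :
    (of α * of β) ^ n ≠ (of β * of α) ^ n := by
  obtain ⟨n, rfl⟩ := Nat.exists_eq_succ_of_ne_zero hn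
  intro h
  have := fstIdx_pow_succ_of_mul_of_smul_empty hij hα hβ n
  rw [h, fstIdx_pow_succ_of_mul_of_smul_empty hij.symm hβ hα] at this
  exact hij (Option.some_injective _ this).symm

theorem not_commute_of_pow_of_mul_of (hij : i ≠ j) (hα : α ≠ 1) (hβ : β ≠ 1) {n : ℕ}
    (hn : n ≠ 0) : ¬ Commute (of α) ((of β * of α) ^ n) := by
  intro h
  have hsemi : SemiconjBy (of α) (of β * of α) (of α * of β) := by simp [SemiconjBy, mul_assoc]
  exact pow_of_mul_of_ne hij hα hβ hn (mul_right_cancel ((hsemi.pow_right n).eq.symm.trans h.eq))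

end Monoid.CoprodI

namespace RegularWreathProduct

variable {D Q : Type*} [Group D] [Group Q] [DecidableEq Q]

def single : D →* D ≀ᵣ Q where
  toFun d := ⟨Pi.mulSingle 1 d, 1⟩
  map_one' := by ext <;> simp
  map_mul' d e := by ext <;> simp [Pi.mulSingle_mul]

theorem right_eq_one_of_commute_single {d : D} (hd : d ≠ 1) {w : D ≀ᵣ Q}
    (h : Commute w (single d)) : w.right = 1 := by
  by_contra hw
  have := congrFun (congrArg left h.eq) w.right
  simp [single, Pi.mulSingle_apply, hw] at this
  exact hd this

theorem right_eq_of_conj_single_eq {d : D} (hd : d ≠ 1) {w w' : D ≀ᵣ Q}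
    (h : w * single d * w⁻¹ = w' * single d * w'⁻¹) : w.right = w'.right := by
  have hc : Commute (w'⁻¹ * w) (single d) :=
    calc w'⁻¹ * w * single d = w'⁻¹ * (w * single d * w⁻¹) * w := by group
      _ = w'⁻¹ * (w' * single d * w'⁻¹) * w := by rw [h]
      _ = single d * (w'⁻¹ * w) := by group
  have := right_eq_one_of_commute_single hd hc
  simpa [inv_mul_eq_one, eq_comm] using this

end RegularWreathProduct

theorem MulAut.pow_apply_eq_self {G : Type*} [Group G] {θ : MulAut G} {x : G} (hx : θ x = x)
    (n : ℕ) : (θ ^ n) x = x := by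
  induction n with
  | zero => rfl
  | succ n ih => rw [pow_succ, MulAut.mul_apply, hx, ih]

theorem MulAut.pow_apply_eq_conj {G : Type*} [Group G] {θ : MulAut G} {x y : G} (hx : θ x = x)
    (hy : θ y = x * y * x⁻¹) (n : ℕ) : (θ ^ n) y = x ^ n * y * (x ^ n)⁻¹ := by
  induction n with
  | zero => simp
  | succ n ih =>
    rw [pow_succ, MulAut.mul_apply, hy, map_mul, map_mul, map_inv, ih, pow_apply_eq_self hx]
    group

theorem ZMod.orderOf_ofAdd_one (n : ℕ) : orderOf (Multiplicative.ofAdd (1 : ZMod n)) = n := by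
  rw [orderOf_ofAdd_eq_addOrderOf, ZMod.addOrderOf_one]

theorem ZMod.ofAdd_one_pow (n : ℕ) : Multiplicative.ofAdd (1 : ZMod n) ^ n = 1 := by
  simpa [ZMod.orderOf_ofAdd_one] using pow_orderOf_eq_one (Multiplicative.ofAdd (1 : ZMod n))

theorem ZMod.ofAdd_one_ne_one {n : ℕ} (hn : n ≠ 1) : Multiplicative.ofAdd (1 : ZMod n) ≠ 1 :=
  fun h => hn (by rw [← ZMod.orderOf_ofAdd_one n, h, orderOf_one])

namespace SimpleGraph

variable {V : Type*} {G : SimpleGraph V}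

theorem isIndepSet_triple {a b c : V} (hab : ¬ G.Adj a b) (hac : ¬ G.Adj a c)
    (hbc : ¬ G.Adj b c) : G.IsIndepSet {a, b, c} := by
  simp [isIndepSet_iff, Set.pairwise_insert, G.adj_comm, hab, hac, hbc]

theorem IsIndepSet.commute_of_adj {T : Type*} [Monoid T] {S : Set V} (hS : G.IsIndepSet S)
    {f : V → T} (hf : ∀ k ∉ S, f k = 1) {u v : V} (huv : G.Adj u v) : Commute (f u) (f v) := by
  by_cases hu : u ∈ S
  · by_cases hv : v ∈ S
    · exact absurd huv (hS hu hv (G.ne_of_adj huv))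
    · simp [hf v hv]
  · simp [hf u hu]

end SimpleGraph

open Monoid RegularWreathProduct

section GraphProduct

variable {N : ℕ} {G : SimpleGraph (Fin N)} {m : Fin N → ℕ}

theorem lift_eq_one_of_mem_grels {T : Type*} [Group T] {f : Fin N → T}
    (hpow : ∀ k, f k ^ m k = 1) (hcomm : ∀ ⦃u v⦄, G.Adj u v → Commute (f u) (f v)) :
    ∀ r ∈ grels G m, FreeGroup.lift f r = 1 := by
  rintro _ (⟨k, rfl⟩ | ⟨u, v, huv, rfl⟩)
  · simp [hpow]
  · simp [(hcomm huv).eq]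

variable (m) in
def wreathTestMap (i j r k : Fin N) :
    Multiplicative (ZMod (m r)) ≀ᵣ CoprodI (fun k => Multiplicative (ZMod (m k))) :=
  if k = r then single (.ofAdd 1)
  else if k = i ∨ k = j then inl (CoprodI.of (i := k) (.ofAdd 1)) else 1

theorem conj_ne_self_of_conj_eq_pow_conj (hm : ∀ k, m k ≠ 1) {i j r : Fin N} (hij : i ≠ j)
    (hir : i ≠ r) (hjr : j ≠ r) (hS : G.IsIndepSet {i, j, r}) {n : ℕ} (hn : n ≠ 0)
    {g : PresentedGroup (grels G m)}
    (hgr : g * .of r * g⁻¹ = (.of j * .of i) ^ n * .of r * ((.of j * .of i) ^ n)⁻¹) :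
    g * .of i * g⁻¹ ≠ .of i := by
  have hpow (k : Fin N) : wreathTestMap m i j r k ^ m k = 1 := by
    unfold wreathTestMap
    split_ifs with hkr
    · subst hkr; rw [← map_pow, ZMod.ofAdd_one_pow, map_one]
    · rw [← map_pow, ← map_pow, ZMod.ofAdd_one_pow, map_one, map_one]
    · exact one_pow _
  have hsupp (k : Fin N) (hk : k ∉ ({i, j, r} : Set (Fin N))) : wreathTestMap m i j r k = 1 := by
    simp only [Set.mem_insert_iff, Set.mem_singleton_iff, not_or] at hk
    simp [wreathTestMap, hk]
  let F := PresentedGroup.toGroup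
    (lift_eq_one_of_mem_grels hpow fun _ _ => hS.commute_of_adj hsupp)
  have F_i : F (.of i) = inl (CoprodI.of (i := i) (.ofAdd 1)) := by
    simp [F, wreathTestMap, hir]
  have F_j : F (.of j) = inl (CoprodI.of (i := j) (.ofAdd 1)) := by
    simp [F, wreathTestMap, hjr]
  have F_r : F (.of r) = single (.ofAdd 1) := by
    simp [F, wreathTestMap]
  have hright :
      (F g).right = (CoprodI.of (i := j) (.ofAdd 1) * CoprodI.of (i := i) (.ofAdd 1)) ^ n := by
    have := congrArg F hgr
    simp only [map_mul, map_inv, map_pow, F_i, F_j, F_r] at this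
    rw [right_eq_of_conj_single_eq (ZMod.ofAdd_one_ne_one (hm r)) this]
    simp [← map_mul, ← map_pow]
  intro hgi
  have := congrArg (fun x => (F x).right) hgi
  simp only [map_mul, map_inv, mul_right, inv_right, F_i, right_inl, hright] at this
  exact CoprodI.not_commute_of_pow_of_mul_of hij (ZMod.ofAdd_one_ne_one (hm i))
    (ZMod.ofAdd_one_ne_one (hm j)) hn (mul_inv_eq_iff_eq_mul.mp this).symm

end GraphProduct

theorem stmt15 {N : ℕ} (G : SimpleGraph (Fin N)) (m : Fin N → ℕ)
    (hm : ∀ i, m i = 0 ∨ IsPrimePow (m i))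
    (i j : Fin N) (hne : i ≠ j) (hnadj : ¬ G.Adj i j)
    (R : Set (Fin N))
    (hRi : IsCompOf G ((gstar G i)ᶜ) R) (hRj : IsCompOf G ((gstar G j)ᶜ) R)
    (φ ψ : MulAut (PresentedGroup (grels G m)))
    (hφ : IsPartialConj G m i R φ) (hψ : IsPartialConj G m j R ψ) :
    ∀ n : ℕ, 0 < n →
      (∀ r ∈ R, ((φ * ψ) ^ n) (PresentedGroup.of r) =
          (PresentedGroup.of j * PresentedGroup.of i) ^ n * PresentedGroup.of r *
            ((PresentedGroup.of j * PresentedGroup.of i) ^ n)⁻¹) ∧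
      ((φ * ψ) ^ n) (PresentedGroup.of i) = PresentedGroup.of i ∧
      ∀ g : PresentedGroup (grels G m), (φ * ψ) ^ n ≠ MulAut.conj g := by
  have hiR : i ∉ R := fun h => hRi.2.1 h (Or.inl rfl)
  have hjR : j ∉ R := fun h => hRj.2.1 h (Or.inl rfl)
  have hfix_i : (φ * ψ) (.of i) = .of i := by rw [MulAut.mul_apply, hψ.2 i hiR, hφ.2 i hiR]
  have hfix_ji : (φ * ψ) (.of j * .of i) = .of j * .of i := by
    rw [map_mul, hfix_i, MulAut.mul_apply, hψ.2 j hjR, hφ.2 j hjR]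
  have hconj (r : Fin N) (hr : r ∈ R) :
      (φ * ψ) (.of r) = (.of j * .of i) * .of r * (.of j * .of i)⁻¹ := by
    rw [MulAut.mul_apply, hψ.1 r hr, map_mul, map_mul, map_inv, hφ.2 j hjR, hφ.1 r hr]
    group
  intro n hn
  have hpow_r (r : Fin N) (hr : r ∈ R) := MulAut.pow_apply_eq_conj hfix_ji (hconj r hr) n
  have hpow_i := MulAut.pow_apply_eq_self hfix_i n
  refine ⟨hpow_r, hpow_i, fun g hg => ?_⟩
  obtain ⟨r, hr⟩ := hRi.1
  obtain ⟨hri, hir⟩ : r ≠ i ∧ ¬ G.Adj i r := not_or.mp (hRi.2.1 hr)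
  obtain ⟨hrj, hjr⟩ : r ≠ j ∧ ¬ G.Adj j r := not_or.mp (hRj.2.1 hr)
  have hconj_r := hpow_r r hr
  rw [hg, MulAut.conj_apply] at hconj_r hpow_i
  have hm_ne_one (k : Fin N) : m k ≠ 1 := (hm k).elim (fun h => h ▸ zero_ne_one) IsPrimePow.ne_one
  exact conj_ne_self_of_conj_eq_pow_conj hm_ne_one hne hri.symm hrj.symm
    (SimpleGraph.isIndepSet_triple hnadj hir hjr) hn.ne' hconj_r hpow_i
end

section
/- Let Γ be a finite tree with at least three vertices and let χ_{iK} be a partial conjugation (v_i a vertex, K a connected component of Γ \ S_i). Then there is exactly one vertex v_ℓ such that v_ℓ is adjacent to v_i and some vertex of K is adjacent to v_ℓ; i.e., every partial conjugation on a tree has a unique link point. -/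
/-!
Since `Γ` is connected, a walk from `K` to `i` leaves `K` through an edge `k – ℓ`, and maximality
of `K` forces `ℓ` into the star of `i`, hence into the link (`K` avoids the star). If `ℓ ≠ ℓ'`
were two link points, a path `ℓ – k ⋯ k' – ℓ'` through the connected set `K` would avoid `i`,
giving a second path from `ℓ` to `ℓ'` besides `ℓ – i – ℓ'`, which is impossible in a tree.
-/

open SimpleGraph

section

variable {V : Type*} {G : SimpleGraph V}

namespace IsCompOf

variable {s K : Set V}

lemma mem_of_adj_s18 (hK : IsCompOf G s K) {x y : V} (hx : x ∈ K) (hxy : G.Adj x y)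
    (hys : y ∈ s) : y ∈ K := by
  have hconn : (G.induce (K ∪ {x, y})).Connected :=
    induce_union_connected hK.2.2.1.preconnected (induce_pair_connected_of_adj hxy).preconnected
      ⟨x, hx, by simp⟩
  have hsub : K ∪ {x, y} ⊆ s := by
    rintro z (hz | rfl | rfl)
    exacts [hK.2.1 hz, hK.2.1 hx, hys]
  exact hK.2.2.2 _ Set.subset_union_left hsub hconn ▸ by simp

lemma exists_walk_support_subset (hK : IsCompOf G s K) {a b : V} (ha : a ∈ K) (hb : b ∈ K) :
    ∃ p : G.Walk a b, ∀ v ∈ p.support, v ∈ K := by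
  obtain ⟨q⟩ := hK.2.2.1.preconnected ⟨a, ha⟩ ⟨b, hb⟩
  refine ⟨q.map (Embedding.induce K).toHom, fun v hv => ?_⟩
  obtain ⟨v', -, rfl⟩ := List.mem_map.mp (q.support_map _ ▸ hv)
  exact v'.2

end IsCompOf

lemma SimpleGraph.IsAcyclic.mem_support_of_adj_of_adj (hG : G.IsAcyclic) {i a b : V}
    (ha : G.Adj i a) (hb : G.Adj i b) (hab : a ≠ b) (p : G.Walk a b) : i ∈ p.support := by
  classical
  have hpath : (Walk.cons ha.symm (Walk.cons hb Walk.nil) : G.Walk a b).IsPath := by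
    simp [ha.ne', hb.ne, hab]
  have := congrArg (fun q : G.Path a b => q.1.support)
    ((hG.subsingleton_path a b).elim ⟨_, hpath⟩ p.toPath)
  exact p.support_toPath_subset_support (by simp [← this])

variable {i : V} {K : Set V}

lemma IsCompOf.notMem_of_compl_gstar (hK : IsCompOf G (gstar G i)ᶜ K) : i ∉ K :=
  fun h => hK.2.1 h (Or.inl rfl)

lemma exists_link_point (hG : G.Connected) (hK : IsCompOf G (gstar G i)ᶜ K) :
    ∃ ℓ, i ∈ glink G ℓ ∧ (K ∩ glink G ℓ).Nonempty := by
  obtain ⟨k, hk⟩ := hK.1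
  obtain ⟨d, -, hd₁, hd₂⟩ :=
    (hG.preconnected k i).some.exists_boundary_dart K hk hK.notMem_of_compl_gstar
  have hstar : d.snd ∈ gstar G i := by
    by_contra h
    exact hd₂ (hK.mem_of_adj_s18 hd₁ d.adj h)
  rcases hstar with hi | hℓ
  · exact absurd (Or.inr (hi ▸ d.adj.symm)) (hK.2.1 hd₁)
  · exact ⟨d.snd, hℓ.symm, d.fst, hd₁, d.adj.symm⟩

lemma link_point_unique (hG : G.IsAcyclic) (hK : IsCompOf G (gstar G i)ᶜ K) {ℓ ℓ' : V}
    (hℓ : i ∈ glink G ℓ ∧ (K ∩ glink G ℓ).Nonempty)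
    (hℓ' : i ∈ glink G ℓ' ∧ (K ∩ glink G ℓ').Nonempty) : ℓ = ℓ' := by
  obtain ⟨hiℓ, k, hk, hℓk : G.Adj ℓ k⟩ := hℓ
  obtain ⟨hiℓ', k', hk', hℓ'k' : G.Adj ℓ' k'⟩ := hℓ'
  by_contra hne
  obtain ⟨p, hp⟩ := hK.exists_walk_support_subset hk hk'
  have hi := hG.mem_support_of_adj_of_adj hiℓ.symm hiℓ'.symm hne
    (Walk.cons hℓk (p.concat hℓ'k'.symm))
  simp only [Walk.support_cons, Walk.support_concat, List.mem_cons, List.mem_append,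
    List.not_mem_nil, or_false] at hi
  rcases hi with h | h | h
  · exact hiℓ.ne h.symm
  · exact hK.notMem_of_compl_gstar (hp i h)
  · exact hiℓ'.ne h.symm

end

theorem stmt18_general {V : Type*} (G : SimpleGraph V) (ht : G.IsTree)
    (i : V) (K : Set V) (hK : IsCompOf G ((gstar G i)ᶜ) K) :
    ∃! ℓ : V, i ∈ glink G ℓ ∧ (K ∩ glink G ℓ).Nonempty := by
  obtain ⟨ℓ, hℓ⟩ := exists_link_point ht.connected hK
  exact ⟨ℓ, hℓ, fun ℓ' hℓ' => link_point_unique ht.isAcyclic hK hℓ' hℓ⟩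

theorem stmt18 {V : Type*} [Fintype V] (G : SimpleGraph V) (ht : G.IsTree)
    (h3 : 3 ≤ Fintype.card V)
    (i : V) (K : Set V) (hK : IsCompOf G ((gstar G i)ᶜ) K) :
    ∃! ℓ : V, i ∈ glink G ℓ ∧ (K ∩ glink G ℓ).Nonempty :=
  stmt18_general G ht i K hK
end
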